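/- Let l be a vertex of the triangular grid and i ≥ 0 an integer. Then the ball {u : dist_G(l,u) ≤ i} is convex in G: for any u, v with dist_G(l,u) ≤ i and dist_G(l,v) ≤ i, every vertex z satisfying dist_G(u,z) + dist_G(z,v) = dist_G(u,v) also satisfies dist_G(l,z) ≤ i. -/

import Mathlib

/-- The triangular grid: the simple graph on ℤ × ℤ where two vertices are adjacent
iff their difference lies in {(1,0),(−1,0),(0,1),(0,−1),(1,−1),(−1,1)}. -/
def triGrid : SimpleGraph (ℤ × ℤ) where
  Adj u v := (u.1 - v.1, u.2 - v.2) ∈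
    ({(1,0), (-1,0), (0,1), (0,-1), (1,-1), (-1,1)} : Set (ℤ × ℤ))
  symm := by
    constructor
    intro u v h
    simp only [Set.mem_insert_iff, Set.mem_singleton_iff, Prod.mk.injEq] at h ⊢
    omega
  loopless := by
    constructor
    intro u h
    simp only [Set.mem_insert_iff, Set.mem_singleton_iff, Prod.mk.injEq] at h
    omega

/-- The subgraph of the triangular grid induced by `S`, viewed as a graph on all of
ℤ × ℤ (vertices outside `S` are isolated): an edge requires both endpoints in `S`. -/
def gOn (S : Set (ℤ × ℤ)) : SimpleGraph (ℤ × ℤ) where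
  Adj u v := triGrid.Adj u v ∧ u ∈ S ∧ v ∈ S
  symm := ⟨fun u v h => ⟨h.1.symm, h.2.2, h.2.1⟩⟩
  loopless := ⟨fun u h => h.1.ne rfl⟩

/-- A shape: a finite nonempty set of grid points. -/
def IsShape (S : Set (ℤ × ℤ)) : Prop := S.Finite ∧ S.Nonempty

/-- The subgraph of the grid induced by `S` is connected. -/
def ShapeConnected (S : Set (ℤ × ℤ)) : Prop :=
  ∀ u ∈ S, ∀ v ∈ S, (gOn S).Reachable u v

/-- A connected shape. -/
def ConnectedShape (S : Set (ℤ × ℤ)) : Prop := IsShape S ∧ ShapeConnected S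

/-- The connected component of `x` in the subgraph induced by the complement of `S`. -/
def compOf (S : Set (ℤ × ℤ)) (x : ℤ × ℤ) : Set (ℤ × ℤ) :=
  {y | (gOn Sᶜ).Reachable x y}

/-- A hole point of `S`: a point lying in a finite connected component of the
complement of `S`. -/
def IsHolePoint (S : Set (ℤ × ℤ)) (x : ℤ × ℤ) : Prop :=
  x ∉ S ∧ (compOf S x).Finite

/-- A simply-connected shape: connected and with no holes. -/
def SimplyConnectedShape (S : Set (ℤ × ℤ)) : Prop :=
  ConnectedShape S ∧ ∀ x, ¬ IsHolePoint S x

/-- Graph distance within the subgraph induced by `S`. -/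
noncomputable def distS (S : Set (ℤ × ℤ)) (u v : ℤ × ℤ) : ℕ := (gOn S).dist u v

/-- Diameter of the shape `S` w.r.t. `distS`. -/
noncomputable def shapeDiam (S : Set (ℤ × ℤ)) : ℕ :=
  sSup {d : ℕ | ∃ u ∈ S, ∃ v ∈ S, distS S u v = d}

/-- A boundary point of `S`: a point of `S` with a neighbor outside `S`. -/
def IsBoundaryPt (S : Set (ℤ × ℤ)) (v : ℤ × ℤ) : Prop :=
  v ∈ S ∧ ∃ w, triGrid.Adj v w ∧ w ∉ S

/-- An outer boundary point of `S`: a point of `S` with a neighbor lying in an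
infinite connected component of the complement of `S`. -/
def IsOuterBoundaryPt (S : Set (ℤ × ℤ)) (v : ℤ × ℤ) : Prop :=
  v ∈ S ∧ ∃ w, triGrid.Adj v w ∧ w ∉ S ∧ (compOf S w).Infinite

/-- An interior point of `S`: a point of `S` all of whose neighbors lie in `S`. -/
def IsInteriorPt (S : Set (ℤ × ℤ)) (v : ℤ × ℤ) : Prop :=
  v ∈ S ∧ ∀ w, triGrid.Adj v w → w ∈ S

/-- The six neighbor directions of a grid point, in cyclic order. -/
def dirs : Fin 6 → ℤ × ℤ := ![(1,0), (0,1), (-1,1), (-1,0), (0,-1), (1,-1)]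

/-- The `i`-th neighbor of `v`, in the cyclic order of the 6-cycle of neighbors. -/
def nbr (v : ℤ × ℤ) (i : Fin 6) : ℤ × ℤ := (v.1 + (dirs i).1, v.2 + (dirs i).2)

/-- The neighbors of `v` lying in `S`. -/
def nbrsIn (S : Set (ℤ × ℤ)) (v : ℤ × ℤ) : Set (ℤ × ℤ) :=
  {w | triGrid.Adj v w ∧ w ∈ S}

/-- `v` is redundant w.r.t. `S`: the neighbors of `v` in `S` induce a connected
subgraph of the grid. -/
def Redundant (S : Set (ℤ × ℤ)) (v : ℤ × ℤ) : Prop :=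
  ∀ u ∈ nbrsIn S v, ∀ w ∈ nbrsIn S v, (gOn (nbrsIn S v)).Reachable u w

/-- `v` is erodable w.r.t. `S`: redundant and an outer boundary point of `S`. -/
def Erodable (S : Set (ℤ × ℤ)) (v : ℤ × ℤ) : Prop :=
  Redundant S v ∧ IsOuterBoundaryPt S v

/-- A set of indices of neighbors that is an arc: a nonempty set of consecutive
positions in the cyclic order. -/
def IsArc (I : Set (Fin 6)) : Prop :=
  ∃ (a : Fin 6) (len : ℕ), 0 < len ∧ len ≤ 6 ∧
    I = {i | ∃ k : ℕ, k < len ∧ i = a + (Fin.ofNat 6 k)}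

/-- The index set of the neighbors of `v` lying outside `S`. -/
def outIdx (S : Set (ℤ × ℤ)) (v : ℤ × ℤ) : Set (Fin 6) := {i | nbr v i ∉ S}

/-- A maximal arc of `v` w.r.t. `S`: a maximal arc of consecutive neighbors of `v`
none of which lies in `S`. -/
def IsMaximalArc (S : Set (ℤ × ℤ)) (v : ℤ × ℤ) (I : Set (Fin 6)) : Prop :=
  IsArc I ∧ (∀ i ∈ I, nbr v i ∉ S) ∧
  ∀ J : Set (Fin 6), IsArc J → (∀ i ∈ J, nbr v i ∉ S) → I ⊆ J → I = J

/-- `v` is SCE (strictly convex and erodable) w.r.t. `S`: the neighbors of `v`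
outside `S` form a single (maximal) arc of at least 3 points, and some neighbor of
`v` lies in an infinite connected component of the complement of `S`. -/
def SCE (S : Set (ℤ × ℤ)) (v : ℤ × ℤ) : Prop :=
  IsArc (outIdx S v) ∧ 3 ≤ (outIdx S v).ncard ∧
  ∃ i : Fin 6, nbr v i ∉ S ∧ (compOf S (nbr v i)).Infinite

/-- The level set `L_i` of `l` in `S`. -/
noncomputable def levelSet (S : Set (ℤ × ℤ)) (l : ℤ × ℤ) (i : ℕ) : Set (ℤ × ℤ) :=
  {u ∈ S | distS S l u = i}

/-- The closed neighborhood `N_i` of `l` in `S`. -/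
noncomputable def closedNbhd (S : Set (ℤ × ℤ)) (l : ℤ × ℤ) (i : ℕ) : Set (ℤ × ℤ) :=
  {u ∈ S | distS S l u ≤ i}

/-- `v ∈ L_i` is `(i,k)`-SCE-related: some `u ∈ L_i` is SCE w.r.t. `N_i` and is at
distance at most `k` from `v` within the subgraph induced by `L_i`. -/
noncomputable def SCERelated (S : Set (ℤ × ℤ)) (l : ℤ × ℤ) (i k : ℕ) (v : ℤ × ℤ) : Prop :=
  ∃ u ∈ levelSet S l i, SCE (closedNbhd S l i) u ∧
    (gOn (levelSet S l i)).Reachable v u ∧ (gOn (levelSet S l i)).dist v u ≤ k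

def hexDist (a b : ℤ × ℤ) : ℕ :=
  max (max (a.1-b.1).natAbs (a.2-b.2).natAbs) (a.1+a.2-b.1-b.2).natAbs

lemma triGrid_adj_iff (a b : ℤ × ℤ) : triGrid.Adj a b ↔
    (a.1 - b.1 = 1 ∧ a.2 - b.2 = 0) ∨ (a.1 - b.1 = -1 ∧ a.2 - b.2 = 0) ∨
    (a.1 - b.1 = 0 ∧ a.2 - b.2 = 1) ∨ (a.1 - b.1 = 0 ∧ a.2 - b.2 = -1) ∨
    (a.1 - b.1 = 1 ∧ a.2 - b.2 = -1) ∨ (a.1 - b.1 = -1 ∧ a.2 - b.2 = 1) := by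
  simp [triGrid, Set.mem_insert_iff, Set.mem_singleton_iff, Prod.ext_iff]

lemma hexDist_step (a b : ℤ × ℤ) (h : a ≠ b) :
    ∃ c, triGrid.Adj a c ∧ hexDist c b + 1 = hexDist a b := by
  have hne : a.1 ≠ b.1 ∨ a.2 ≠ b.2 := by
    by_contra hc; push_neg at hc; exact h (Prod.ext hc.1 hc.2)
  rcases lt_trichotomy a.1 b.1 with h1 | h1 | h1 <;>
    rcases lt_trichotomy a.2 b.2 with h2 | h2 | h2
  · exact ⟨(a.1+1, a.2), by rw [triGrid_adj_iff]; omega, by simp only [hexDist]; omega⟩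
  · exact ⟨(a.1+1, a.2), by rw [triGrid_adj_iff]; omega, by simp only [hexDist]; omega⟩
  · exact ⟨(a.1+1, a.2-1), by rw [triGrid_adj_iff]; omega, by simp only [hexDist]; omega⟩
  · exact ⟨(a.1, a.2+1), by rw [triGrid_adj_iff]; omega, by simp only [hexDist]; omega⟩
  · exact (h (Prod.ext h1 h2)).elim
  · exact ⟨(a.1, a.2-1), by rw [triGrid_adj_iff]; omega, by simp only [hexDist]; omega⟩
  · exact ⟨(a.1-1, a.2+1), by rw [triGrid_adj_iff]; omega, by simp only [hexDist]; omega⟩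
  · exact ⟨(a.1-1, a.2), by rw [triGrid_adj_iff]; omega, by simp only [hexDist]; omega⟩
  · exact ⟨(a.1-1, a.2), by rw [triGrid_adj_iff]; omega, by simp only [hexDist]; omega⟩

lemma exists_walk_hex : ∀ (n : ℕ) (a b : ℤ × ℤ), hexDist a b = n →
    ∃ w : triGrid.Walk a b, w.length = n := by
  intro n
  induction n with
  | zero =>
    intro a b h
    have : a = b := by
      simp only [hexDist] at h
      exact Prod.ext (by omega) (by omega)
    subst this; exact ⟨SimpleGraph.Walk.nil, rfl⟩
  | succ n ih =>
    intro a b h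
    have hne : a ≠ b := by
      intro he; subst he; simp only [hexDist] at h; omega
    obtain ⟨c, hadj, hc⟩ := hexDist_step a b hne
    obtain ⟨w, hw⟩ := ih c b (by omega)
    exact ⟨SimpleGraph.Walk.cons hadj w, by simp [hw]⟩

lemma hexDist_le_walk : ∀ {a b : ℤ × ℤ} (w : triGrid.Walk a b), hexDist a b ≤ w.length := by
  intro a b w
  induction w with
  | nil => simp [hexDist]
  | @cons u c b hadj w ih =>
    rw [triGrid_adj_iff] at hadj
    simp only [SimpleGraph.Walk.length_cons]
    simp only [hexDist] at ih ⊢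
    omega

lemma triGrid_dist_eq (a b : ℤ × ℤ) : triGrid.dist a b = hexDist a b := by
  obtain ⟨w, hw⟩ := exists_walk_hex (hexDist a b) a b rfl
  refine le_antisymm (hw ▸ SimpleGraph.dist_le w) ?_
  obtain ⟨p, hp⟩ := SimpleGraph.Reachable.exists_walk_length_eq_dist ⟨w⟩
  calc hexDist a b ≤ p.length := hexDist_le_walk p
    _ = _ := hp


lemma triAbs (a b c : ℤ) : (a-b).natAbs ≤ (a-c).natAbs + (c-b).natAbs := by omega

lemma triAbs' (a b c : ℤ) (h1 : a < c) (h2 : b < c) :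
    (a-b).natAbs + 2 ≤ (a-c).natAbs + (c-b).natAbs := by omega

lemma triAbs'' (a b c : ℤ) (h1 : c < a) (h2 : c < b) :
    (a-b).natAbs + 2 ≤ (a-c).natAbs + (c-b).natAbs := by omega

lemma triAbs3 (a1 a2 b1 b2 c1 c2 : ℤ) :
    (a1+a2-b1-b2).natAbs ≤ (a1+a2-c1-c2).natAbs + (c1+c2-b1-b2).natAbs := by omega

lemma triAbs3' (a1 a2 b1 b2 c1 c2 : ℤ) (h1 : a1+a2 < c1+c2) (h2 : b1+b2 < c1+c2) :
    (a1+a2-b1-b2).natAbs + 2 ≤ (a1+a2-c1-c2).natAbs + (c1+c2-b1-b2).natAbs := by omega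

lemma triAbs3'' (a1 a2 b1 b2 c1 c2 : ℤ) (h1 : c1+c2 < a1+a2) (h2 : c1+c2 < b1+b2) :
    (a1+a2-b1-b2).natAbs + 2 ≤ (a1+a2-c1-c2).natAbs + (c1+c2-b1-b2).natAbs := by omega

lemma key (A1 A2 A3 B1 B2 B3 C1 C2 C3 : ℕ)
    (h3 : A1 + A2 + A3 + (B1 + B2 + B3) = C1 + C2 + C3)
    (t1 : C1 + 2 ≤ A1 + B1) (t2 : C2 ≤ A2 + B2) (t3 : C3 ≤ A3 + B3) : False := by omega

lemma key2 (A1 A2 A3 B1 B2 B3 C1 C2 C3 : ℕ)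
    (h3 : A1 + A2 + A3 + (B1 + B2 + B3) = C1 + C2 + C3)
    (t1 : C1 ≤ A1 + B1) (t2 : C2 + 2 ≤ A2 + B2) (t3 : C3 ≤ A3 + B3) : False := by omega

lemma key3 (A1 A2 A3 B1 B2 B3 C1 C2 C3 : ℕ)
    (h3 : A1 + A2 + A3 + (B1 + B2 + B3) = C1 + C2 + C3)
    (t1 : C1 ≤ A1 + B1) (t2 : C2 ≤ A2 + B2) (t3 : C3 + 2 ≤ A3 + B3) : False := by omega

lemma absB1 (X A B Z : ℤ) (i : ℕ) (h1 : (X-A).natAbs ≤ i) (h2 : (X-B).natAbs ≤ i)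
    (hc : Z ≤ A ∨ Z ≤ B) (hc' : A ≤ Z ∨ B ≤ Z) : (X-Z).natAbs ≤ i := by omega

lemma absB2 (X1 X2 A1 A2 B1 B2 Z1 Z2 : ℤ) (i : ℕ)
    (h1 : (X1+X2-A1-A2).natAbs ≤ i) (h2 : (X1+X2-B1-B2).natAbs ≤ i)
    (hc : Z1+Z2 ≤ A1+A2 ∨ Z1+Z2 ≤ B1+B2) (hc' : A1+A2 ≤ Z1+Z2 ∨ B1+B2 ≤ Z1+Z2) :
    (X1+X2-Z1-Z2).natAbs ≤ i := by omega

lemma twice_hexDist (a b : ℤ × ℤ) : 2 * hexDist a b =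
    (a.1-b.1).natAbs + (a.2-b.2).natAbs + (a.1+a.2-b.1-b.2).natAbs := by
  simp only [hexDist]; omega

lemma hexConvex (l u v z : ℤ × ℤ) (i : ℕ)
    (h1 : hexDist l u ≤ i) (h2 : hexDist l v ≤ i)
    (h3 : hexDist u z + hexDist z v = hexDist u v) : hexDist l z ≤ i := by
  have H3 : (u.1-z.1).natAbs + (u.2-z.2).natAbs + (u.1+u.2-z.1-z.2).natAbs
      + ((z.1-v.1).natAbs + (z.2-v.2).natAbs + (z.1+z.2-v.1-v.2).natAbs)
      = (u.1-v.1).natAbs + (u.2-v.2).natAbs + (u.1+u.2-v.1-v.2).natAbs := by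
    have a1 := twice_hexDist u z
    have a2 := twice_hexDist z v
    have a3 := twice_hexDist u v
    omega
  have b1a : z.1 ≤ u.1 ∨ z.1 ≤ v.1 := by
    by_contra hc; push_neg at hc
    exact key _ _ _ _ _ _ _ _ _ H3 (triAbs' u.1 v.1 z.1 hc.1 hc.2)
      (triAbs u.2 v.2 z.2) (triAbs3 u.1 u.2 v.1 v.2 z.1 z.2)
  have b1b : u.1 ≤ z.1 ∨ v.1 ≤ z.1 := by
    by_contra hc; push_neg at hc
    exact key _ _ _ _ _ _ _ _ _ H3 (triAbs'' u.1 v.1 z.1 hc.1 hc.2)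
      (triAbs u.2 v.2 z.2) (triAbs3 u.1 u.2 v.1 v.2 z.1 z.2)
  have b2a : z.2 ≤ u.2 ∨ z.2 ≤ v.2 := by
    by_contra hc; push_neg at hc
    exact key2 _ _ _ _ _ _ _ _ _ H3 (triAbs u.1 v.1 z.1)
      (triAbs' u.2 v.2 z.2 hc.1 hc.2) (triAbs3 u.1 u.2 v.1 v.2 z.1 z.2)
  have b2b : u.2 ≤ z.2 ∨ v.2 ≤ z.2 := by
    by_contra hc; push_neg at hc
    exact key2 _ _ _ _ _ _ _ _ _ H3 (triAbs u.1 v.1 z.1)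
      (triAbs'' u.2 v.2 z.2 hc.1 hc.2) (triAbs3 u.1 u.2 v.1 v.2 z.1 z.2)
  have b3a : z.1+z.2 ≤ u.1+u.2 ∨ z.1+z.2 ≤ v.1+v.2 := by
    by_contra hc; push_neg at hc
    exact key3 _ _ _ _ _ _ _ _ _ H3 (triAbs u.1 v.1 z.1) (triAbs u.2 v.2 z.2)
      (triAbs3' u.1 u.2 v.1 v.2 z.1 z.2 hc.1 hc.2)
  have b3b : u.1+u.2 ≤ z.1+z.2 ∨ v.1+v.2 ≤ z.1+z.2 := by
    by_contra hc; push_neg at hc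
    exact key3 _ _ _ _ _ _ _ _ _ H3 (triAbs u.1 v.1 z.1) (triAbs u.2 v.2 z.2)
      (triAbs3'' u.1 u.2 v.1 v.2 z.1 z.2 hc.1 hc.2)
  simp only [hexDist, max_le_iff] at h1 h2 ⊢
  exact ⟨⟨absB1 l.1 u.1 v.1 z.1 i h1.1.1 h2.1.1 b1a b1b,
          absB1 l.2 u.2 v.2 z.2 i h1.1.2 h2.1.2 b2a b2b⟩,
         absB2 l.1 l.2 u.1 u.2 v.1 v.2 z.1 z.2 i h1.2 h2.2 b3a b3b⟩

/-- Balls of the triangular grid are convex: if `dist_G(l,u) ≤ i`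
and `dist_G(l,v) ≤ i`, then every `z` on a shortest path between `u` and `v`
satisfies `dist_G(l,z) ≤ i`. -/
theorem stmt18 (l : ℤ × ℤ) (i : ℕ) :
    ∀ u v z : ℤ × ℤ, triGrid.dist l u ≤ i → triGrid.dist l v ≤ i →
      triGrid.dist u z + triGrid.dist z v = triGrid.dist u v →
      triGrid.dist l z ≤ i := by
  intro u v z h1 h2 h3
  rw [triGrid_dist_eq l u] at h1
  rw [triGrid_dist_eq l v] at h2
  rw [triGrid_dist_eq u z, triGrid_dist_eq z v, triGrid_dist_eq u v] at h3
  rw [triGrid_dist_eq l z]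
  exact hexConvex l u v z i h1 h2 h3
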